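/- arXiv:2103.05382 — 2 statements merged into one kernel-verified Lean document; each statement's English description precedes it below -/
import Mathlib

section
/- For integers p ≥ 1 and n ≥ 0, the integral K(p,n) = ∫₀¹ (z(1-z))^((2p-1)/2) (z - 1/2)^(2n) dz satisfies the recurrence K(p,n) = ((2p-1)/(2n+1)) · K(p-1, n+1). -/
open MeasureTheory Real

/-- `K(p,n) = ∫₀¹ (z(1-z))^((2p-1)/2) (z - 1/2)^(2n) dz`. -/
noncomputable def Kint (p n : ℕ) : ℝ :=
  ∫ z in (0:ℝ)..1, (z * (1 - z)) ^ ((2 * (p : ℝ) - 1) / 2) * (z - 1/2) ^ (2 * n)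

/-!
The substitution `z = (1 - cos φ) / 2` gives `z (1 - z) = (sin φ / 2)²` and `z - 1/2 = -cos φ / 2`,
so `K(p,n) = 4^{-(p+n)} ∫₀^π sin^{2p} φ cos^{2n} φ dφ`. Integrating by parts, moving one factor
`sin φ cos^{2n} φ` into `d(-cos^{2n+1} φ / (2n+1))`, lowers the sine power by two and raises the
cosine power by two; the boundary terms vanish since `sin 0 = sin π = 0`. Working on the
trigonometric side avoids the endpoint singularity of `(z(1-z))^{-1/2}` that a direct integration
by parts in `z` would meet when `p = 1`.
-/

open Set

theorem integral_zero_one_eq_setIntegral_Ioo_half_sin_mul (g : ℝ → ℝ) :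
    ∫ z in (0:ℝ)..1, g z = ∫ φ in Ioo 0 π, sin φ / 2 * g ((1 - cos φ) / 2) := by
  have hsubst := integral_Icc_deriv_smul_of_deriv_nonneg (g := g)
    (f := fun φ => (1 - cos φ) / 2) (f' := fun φ => sin φ / 2) (a := 0) (b := π)
    (by fun_prop)
    (fun φ _ => by simpa using ((hasDerivAt_cos φ).const_sub 1).div_const 2)
    (fun φ hφ => div_nonneg (sin_nonneg_of_nonneg_of_le_pi hφ.1.le hφ.2.le) zero_le_two)
    pi_pos.le
  norm_num [smul_eq_mul] at hsubst
  rw [intervalIntegral.integral_of_le zero_le_one, ← integral_Icc_eq_integral_Ioc, ← hsubst,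
    integral_Icc_eq_integral_Ioo]

theorem self_mul_sq_rpow_eq_pow {s : ℝ} (hs : 0 < s) (p : ℕ) :
    s * (s ^ 2) ^ ((2 * (p : ℝ) - 1) / 2) = s ^ (2 * p) := by
  rw [← rpow_natCast s 2, ← rpow_mul hs.le, ← rpow_natCast s (2 * p),
    show ((2 * p : ℕ) : ℝ) = 1 + (2 : ℕ) * ((2 * p - 1) / 2) by push_cast; ring, rpow_add hs,
    rpow_one]

theorem half_sin_mul_Kint_integrand {φ : ℝ} (hφ : 0 < sin φ) (p n : ℕ) :
    sin φ / 2 * ((((1 - cos φ) / 2) * (1 - (1 - cos φ) / 2)) ^ ((2 * (p : ℝ) - 1) / 2)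
      * ((1 - cos φ) / 2 - 1 / 2) ^ (2 * n))
      = sin φ ^ (2 * p) * cos φ ^ (2 * n) / 4 ^ (p + n) := by
  have hprod : (1 - cos φ) / 2 * (1 - (1 - cos φ) / 2) = (sin φ / 2) ^ 2 := by
    nlinarith [sin_sq_add_cos_sq φ]
  have hshift : (1 - cos φ) / 2 - 1 / 2 = -(cos φ / 2) := by ring
  rw [hprod, hshift, (even_two_mul n).neg_pow, ← mul_assoc,
    self_mul_sq_rpow_eq_pow (half_pos hφ), div_pow, div_pow, pow_add,
    show (4 : ℝ) = 2 ^ 2 by norm_num, ← pow_mul, ← pow_mul]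
  ring

theorem Kint_eq_integral_sin_pow_mul_cos_pow (p n : ℕ) :
    Kint p n = (∫ φ in (0:ℝ)..π, sin φ ^ (2 * p) * cos φ ^ (2 * n)) / 4 ^ (p + n) := by
  rw [Kint, integral_zero_one_eq_setIntegral_Ioo_half_sin_mul,
    setIntegral_congr_fun measurableSet_Ioo
      (fun φ hφ => half_sin_mul_Kint_integrand (sin_pos_of_pos_of_lt_pi hφ.1 hφ.2) p n),
    integral_div, intervalIntegral.integral_of_le pi_pos.le, integral_Ioc_eq_integral_Ioo]

theorem integral_sin_pow_add_two_mul_cos_pow (m n : ℕ) :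
    ∫ φ in (0:ℝ)..π, sin φ ^ (m + 2) * cos φ ^ n
      = (m + 1) / (n + 1) * ∫ φ in (0:ℝ)..π, sin φ ^ m * cos φ ^ (n + 2) := by
  have hu : ∀ φ ∈ uIcc 0 π, HasDerivAt (fun φ => sin φ ^ (m + 1))
      ((m + 1) * sin φ ^ m * cos φ) φ := fun φ _ => by
    simpa using (hasDerivAt_sin φ).fun_pow (m + 1)
  have hv : ∀ φ ∈ uIcc 0 π, HasDerivAt (fun φ => -cos φ ^ (n + 1) / (n + 1))
      (sin φ * cos φ ^ n) φ := fun φ _ => by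
    refine (((hasDerivAt_cos φ).fun_pow (n + 1)).fun_neg.div_const ((n : ℝ) + 1)).congr_deriv ?_
    rw [Nat.add_sub_cancel]
    push_cast
    field_simp
  have hparts := intervalIntegral.integral_mul_deriv_eq_deriv_mul hu hv
    (by apply Continuous.intervalIntegrable; fun_prop)
    (by apply Continuous.intervalIntegrable; fun_prop)
  simp only [sin_zero, sin_pi, zero_pow m.succ_ne_zero, zero_mul, sub_self, zero_sub] at hparts
  rw [← intervalIntegral.integral_const_mul]
  calc ∫ φ in (0:ℝ)..π, sin φ ^ (m + 2) * cos φ ^ n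
      = ∫ φ in (0:ℝ)..π, sin φ ^ (m + 1) * (sin φ * cos φ ^ n) := by
        congr 1; ext φ; ring
    _ = -∫ φ in (0:ℝ)..π, (m + 1) * sin φ ^ m * cos φ * (-cos φ ^ (n + 1) / (n + 1)) := hparts
    _ = _ := by
        rw [← intervalIntegral.integral_neg]
        congr 1; ext φ; field_simp; ring

/-- For integers `p ≥ 1` and `n ≥ 0`, `K(p,n) = ((2p-1)/(2n+1)) · K(p-1, n+1)`. -/
theorem Kint_recurrence (p n : ℕ) (hp : 1 ≤ p) :
    Kint p n = ((2 * (p : ℝ) - 1) / (2 * (n : ℝ) + 1)) * Kint (p - 1) (n + 1) := by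
  obtain ⟨m, rfl⟩ := Nat.exists_eq_add_of_le' hp
  rw [Nat.add_sub_cancel, Kint_eq_integral_sin_pow_mul_cos_pow,
    Kint_eq_integral_sin_pow_mul_cos_pow, mul_add_one, mul_add_one,
    integral_sin_pow_add_two_mul_cos_pow]
  push_cast
  ring
end

section
/- Let F₀, F₁, ..., F_ℓ : L → ℝ be ℓ+1 linearly independent analytic functions on an open real interval L, and suppose one of them, F_k, has constant sign on L (never vanishes). Then there exist real constants d₀, ..., d_ℓ such that the linear combination Σ_{j=0}^ℓ d_j F_j has at least ℓ simple zeros in L. -/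
/-!
Linear independence on `(a, b)` yields nodes `x₀ < ⋯ < x_ℓ` at which any values can be
interpolated by a combination `G = ∑ dⱼ Fⱼ`; prescribe `G (xᵢ) = (-1)ⁱ F_k (xᵢ)`. The quotient
`H = G / F_k` is analytic and takes the values `±1` alternately at the nodes, so it is not
constant, and its critical points in `[x₀, x_ℓ]` are finite in number. A level `c ∈ (-1, 1)`
that is not a critical value is crossed by `H` in each `(xᵢ, xᵢ₊₁)`, and at each crossing
`G - c F_k = (H - c) F_k` has derivative `H' F_k ≠ 0`.
-/

open Set Submodule Module Filter

section Interpolation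

variable {K α : Type*} [Field K]

theorem span_image_eval_eq_top {n : ℕ} {s : Set α} {F : Fin n → α → K}
    (hli : ∀ c : Fin n → K, (∀ x ∈ s, ∑ j, c j * F j x = 0) → ∀ j, c j = 0) :
    span K ((fun t j => F j t) '' s) = ⊤ := by
  by_contra hne
  obtain ⟨φ, hφ, hφs⟩ := exists_dual_map_eq_bot_of_lt_top (lt_top_iff_ne_top.2 hne) inferInstance
  have hφ_apply (w : Fin n → K) : φ w = ∑ j, φ (fun i => if j = i then 1 else 0) * w j := by
    rw [LinearMap.pi_apply_eq_sum_univ φ w]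
    simp only [smul_eq_mul, mul_comm]
  have hc := hli (fun j => φ (fun i => if j = i then 1 else 0)) fun t ht => by
    rw [← hφ_apply]
    exact (Submodule.eq_bot_iff _).1 hφs _ (mem_map_of_mem (subset_span ⟨t, ht, rfl⟩))
  exact hφ (LinearMap.ext fun w => by simp [hφ_apply w, hc])

variable [LinearOrder α]

theorem exists_strictMono_linearIndependent_comp {V : Type*} [AddCommGroup V] [Module K V]
    [FiniteDimensional K V] {n : ℕ} (hn : finrank K V = n) {v : α → V} {s : Set α}
    (hs : span K (v '' s) = ⊤) :
    ∃ x : Fin n → α, StrictMono x ∧ (∀ i, x i ∈ s) ∧ LinearIndependent K (v ∘ x) := by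
  obtain ⟨b, hbs, -, hsb, hb⟩ :=
    exists_linearIndepOn_extension (linearIndepOn_empty K v) (empty_subset s)
  have : Finite b := hb.finite
  obtain ⟨P, rfl⟩ := (toFinite b).exists_finset_coe
  have hcard : P.card = n := by
    have hspan : span K (range fun p : (P : Set α) => v p) = ⊤ :=
      eq_top_iff.2 (hs ▸ span_le.2 (hsb.trans (by rw [← image_eq_range])))
    have h := linearIndependent_iff_card_eq_finrank_span.1 hb
    rw [Set.finrank, hspan, finrank_top, hn] at h
    simpa using h
  refine ⟨fun i => P.orderEmbOfFin hcard i, (P.orderEmbOfFin hcard).strictMono,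
    fun i => hbs (P.orderEmbOfFin_mem hcard i), ?_⟩
  simpa [Function.comp_def] using hb.comp _ (P.orderIsoOfFin hcard).injective

theorem exists_strictMono_interpolation {n : ℕ} {s : Set α} {F : Fin n → α → K}
    (hli : ∀ c : Fin n → K, (∀ x ∈ s, ∑ j, c j * F j x = 0) → ∀ j, c j = 0) :
    ∃ x : Fin n → α, StrictMono x ∧ (∀ i, x i ∈ s) ∧
      ∀ r : Fin n → K, ∃ d : Fin n → K, ∀ i, ∑ j, d j * F j (x i) = r i := by
  obtain ⟨x, hx, hxs, hind⟩ :=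
    exists_strictMono_linearIndependent_comp (finrank_fin_fun K) (span_image_eval_eq_top hli)
  refine ⟨x, hx, hxs, fun r => ?_⟩
  obtain ⟨d, hd⟩ := Matrix.mulVec_surjective_iff_isUnit.2
    (Matrix.linearIndependent_rows_iff_isUnit (A := Matrix.of fun i j => F j (x i)) |>.1 hind) r
  exact ⟨d, fun i => by simpa [Matrix.mulVec, dotProduct, mul_comm] using congr_fun hd i⟩

end Interpolation

section CriticalPoints

variable {𝕜 E : Type*} [RCLike 𝕜] [NormedAddCommGroup E] [NormedSpace 𝕜 E] [CompleteSpace E]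
  {f : 𝕜 → E} {U L : Set 𝕜}

theorem AnalyticOnNhd.finite_setOf_deriv_eq_zero (hf : AnalyticOnNhd 𝕜 f U)
    (hU : IsOpen U) (hU' : IsPreconnected U) {p q : 𝕜} (hp : p ∈ U) (hq : q ∈ U)
    (hpq : f p ≠ f q) (hL : IsCompact L) (hLU : L ⊆ U) :
    {t ∈ L | deriv f t = 0}.Finite := by
  rcases hf.deriv.eqOn_zero_or_eventually_ne_zero_of_preconnected hU' with h | h
  · exact absurd (hU.is_const_of_deriv_eq_zero hU' hf.differentiableOn h hp hq) hpq
  · convert hL.finite_sdiff_of_mem_codiscreteWithin (codiscreteWithin_mono hLU h) using 1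
    ext t
    simp

theorem AnalyticOnNhd.exists_mem_forall_deriv_ne_zero
    (hf : AnalyticOnNhd 𝕜 f U) (hU : IsOpen U) (hU' : IsPreconnected U) {p q : 𝕜} (hp : p ∈ U)
    (hq : q ∈ U) (hpq : f p ≠ f q) (hL : IsCompact L) (hLU : L ⊆ U) {T : Set E}
    (hT : T.Infinite) : ∃ c ∈ T, ∀ t ∈ L, f t = c → deriv f t ≠ 0 := by
  obtain ⟨c, hc, hcrit⟩ :=
    (hT.sdiff ((hf.finite_setOf_deriv_eq_zero hU hU' hp hq hpq hL hLU).image f)).nonempty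
  exact ⟨c, hc, fun t ht hft hd => hcrit ⟨t, ⟨ht, hd⟩, hft⟩⟩

end CriticalPoints

theorem Monotone.Icc_castSucc_succ_subset {α : Type*} [Preorder α] {n : ℕ}
    {x : Fin (n + 1) → α} (hx : Monotone x) (i : Fin n) :
    Icc (x i.castSucc) (x i.succ) ⊆ Icc (x 0) (x (Fin.last n)) :=
  Icc_subset_Icc (hx (Fin.zero_le _)) (hx (Fin.le_last _))

section Crossings

variable {α : Type*} [ConditionallyCompleteLinearOrder α] [TopologicalSpace α] [OrderTopology α]
  [DenselyOrdered α]

theorem exists_mem_Ioo_eq_of_mul_neg {f : α → ℝ} {p q : α} (hpq : p ≤ q)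
    (hf : ContinuousOn f (Icc p q)) {c : ℝ} (hsign : (f p - c) * (f q - c) < 0) :
    ∃ z ∈ Ioo p q, f z = c := by
  rcases mul_neg_iff.1 hsign with ⟨hp, hq⟩ | ⟨hp, hq⟩
  · exact intermediate_value_Ioo' hpq hf ⟨by linarith, by linarith⟩
  · exact intermediate_value_Ioo hpq hf ⟨by linarith, by linarith⟩

theorem exists_strictMono_crossings {f : α → ℝ} {n : ℕ} {x : Fin (n + 1) → α}
    (hx : StrictMono x) (hf : ContinuousOn f (Icc (x 0) (x (Fin.last n)))) {c : ℝ}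
    (hsign : ∀ i : Fin n, (f (x i.castSucc) - c) * (f (x i.succ) - c) < 0) :
    ∃ z : Fin n → α, StrictMono z ∧ ∀ i, z i ∈ Ioo (x i.castSucc) (x i.succ) ∧ f (z i) = c := by
  choose z hz hzc using fun i => exists_mem_Ioo_eq_of_mul_neg
    (hx Fin.castSucc_lt_succ).le (hf.mono (hx.monotone.Icc_castSucc_succ_subset i)) (hsign i)
  refine ⟨z, fun i j hij => ?_, fun i => ⟨hz i, hzc i⟩⟩
  calc z i < x i.succ := (hz i).2
    _ ≤ x j.castSucc := hx.monotone (Fin.succ_le_castSucc_iff.2 hij)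
    _ < z j := (hz j).1

end Crossings

theorem HasDerivAt.mul_of_eq_zero {𝕜 𝔸 : Type*} [NontriviallyNormedField 𝕜] [NormedRing 𝔸]
    [NormedAlgebra 𝕜 𝔸] {f g : 𝕜 → 𝔸} {f' : 𝔸} {z : 𝕜} (hf : HasDerivAt f f' z)
    (hg : DifferentiableAt 𝕜 g z) (hfz : f z = 0) :
    HasDerivAt (fun t => f t * g t) (f' * g z) z := by
  simpa [hfz] using hf.fun_mul hg.hasDerivAt

theorem AnalyticOnNhd.exists_regular_level_of_alternating {H : ℝ → ℝ} {U : Set ℝ}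
    (hH : AnalyticOnNhd ℝ H U) (hU : IsOpen U) (hU' : IsPreconnected U) {n : ℕ}
    {x : Fin (n + 2) → ℝ} (hx : StrictMono x) (hxU : ∀ i, x i ∈ U)
    (hHx : ∀ i, H (x i) = (-1) ^ (i : ℕ)) :
    ∃ c : ℝ, ∃ S : Finset ℝ, n + 1 ≤ S.card ∧ ∀ t ∈ S, t ∈ U ∧ H t = c ∧ deriv H t ≠ 0 := by
  have hLU : Icc (x 0) (x (Fin.last _)) ⊆ U := hU'.Icc_subset (hxU 0) (hxU _)
  obtain ⟨c, hc, hreg⟩ := hH.exists_mem_forall_deriv_ne_zero hU hU' (hxU 0) (hxU 1)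
    (by norm_num [hHx]) isCompact_Icc hLU (Ioo_infinite (by norm_num : (-1 : ℝ) < 1))
  obtain ⟨z, hz, hzx⟩ := exists_strictMono_crossings (c := c) hx (hH.continuousOn.mono hLU)
    fun i => by
      have hsq : ((-1 : ℝ) ^ (i : ℕ)) ^ 2 = 1 := by rw [← pow_mul, mul_comm, pow_mul]; norm_num
      simp only [hHx, Fin.val_succ, Fin.val_castSucc, pow_succ]
      nlinarith [hc.1, hc.2]
  refine ⟨c, Finset.univ.image z, by simp [Finset.card_image_of_injective _ hz.injective], ?_⟩
  simp only [Finset.mem_image, Finset.mem_univ, true_and, forall_exists_index]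
  rintro _ i rfl
  have hzL := hx.monotone.Icc_castSucc_succ_subset i (Ioo_subset_Icc_self (hzx i).1)
  exact ⟨hLU hzL, (hzx i).2, hreg _ hzL (hzx i).2⟩

theorem linear_combination_simple_zeros_general (ℓ : ℕ) (a b : ℝ)
    (F : Fin (ℓ + 1) → ℝ → ℝ)
    (hanal : ∀ j, AnalyticOnNhd ℝ (F j) (Set.Ioo a b))
    (hli : ∀ c : Fin (ℓ + 1) → ℝ,
      (∀ x ∈ Set.Ioo a b, ∑ j, c j * F j x = 0) → ∀ j, c j = 0)
    (k : Fin (ℓ + 1)) (hk : ∀ x ∈ Set.Ioo a b, F k x ≠ 0) :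
    ∃ d : Fin (ℓ + 1) → ℝ, ∃ S : Finset ℝ, ℓ ≤ S.card ∧
      ∀ x ∈ S, x ∈ Set.Ioo a b ∧ (∑ j, d j * F j x) = 0 ∧
        deriv (fun t => ∑ j, d j * F j t) x ≠ 0 := by
  obtain _ | m := ℓ
  · exact ⟨0, ∅, by simp⟩
  obtain ⟨x, hx, hxs, hinterp⟩ := exists_strictMono_interpolation hli
  obtain ⟨d, hd⟩ := hinterp fun i => (-1) ^ (i : ℕ) * F k (x i)
  set H := fun t => (∑ j, d j * F j t) / F k t
  have hH : AnalyticOnNhd ℝ H (Ioo a b) :=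
    (Finset.analyticOnNhd_fun_sum _ fun j _ => analyticOnNhd_const.mul (hanal j)).div (hanal k) hk
  obtain ⟨c, S, hS, hSH⟩ := hH.exists_regular_level_of_alternating isOpen_Ioo isPreconnected_Ioo
    hx hxs fun i => by simp [H, hd, hk _ (hxs i)]
  have hcomb : ∀ t ∈ Ioo a b,
      ∑ j, (d - Pi.single k c : Fin _ → ℝ) j * F j t = (H t - c) * F k t := by
    intro t ht
    simp [H, sub_mul, Finset.sum_sub_distrib, Pi.single_apply, hk t ht]
  refine ⟨d - Pi.single k c, S, hS, fun t ht => ?_⟩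
  obtain ⟨hts, hHt, hH't⟩ := hSH t ht
  refine ⟨hts, by rw [hcomb t hts, hHt, sub_self, zero_mul], ?_⟩
  rw [(eventuallyEq_of_mem (isOpen_Ioo.mem_nhds hts) hcomb).deriv_eq,
    (((hH t hts).differentiableAt.hasDerivAt.sub_const c).mul_of_eq_zero
      (hanal k t hts).differentiableAt (sub_eq_zero.2 hHt)).deriv]
  exact mul_ne_zero hH't (hk t hts)

/-- If `F₀, …, F_ℓ` are `ℓ+1` linearly independent analytic functions on an open
interval `(a,b)` and one of them never vanishes there, then some linear
combination `∑ dⱼ Fⱼ` has at least `ℓ` simple zeros in `(a,b)`. -/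
theorem linear_combination_simple_zeros (ℓ : ℕ) (a b : ℝ) (hab : a < b)
    (F : Fin (ℓ + 1) → ℝ → ℝ)
    (hanal : ∀ j, AnalyticOnNhd ℝ (F j) (Set.Ioo a b))
    (hli : ∀ c : Fin (ℓ + 1) → ℝ,
      (∀ x ∈ Set.Ioo a b, ∑ j, c j * F j x = 0) → ∀ j, c j = 0)
    (k : Fin (ℓ + 1)) (hk : ∀ x ∈ Set.Ioo a b, F k x ≠ 0) :
    ∃ d : Fin (ℓ + 1) → ℝ, ∃ S : Finset ℝ, ℓ ≤ S.card ∧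
      ∀ x ∈ S, x ∈ Set.Ioo a b ∧ (∑ j, d j * F j x) = 0 ∧
        deriv (fun t => ∑ j, d j * F j t) x ≠ 0 :=
  linear_combination_simple_zeros_general ℓ a b F hanal hli k hk
end
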